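/- The sequence V_d = max_{v ≠ 0} (‖v‖₁/‖v‖₂)·vol_{d-1}(C^d ∩ v^⊥) is non-decreasing in d: V_d ≤ V_{d+1} for all d ≥ 2. -/

import Mathlib

open MeasureTheory Real Filter

noncomputable def cube (d : ℕ) : Set (EuclideanSpace ℝ (Fin d)) :=
  {x | ∀ i, |x i| ≤ 1 / 2}

noncomputable def hvol (d : ℕ) (S : Set (EuclideanSpace ℝ (Fin d))) : ℝ :=
  (μH[(d : ℝ) - 1] S).toReal

def perp {d : ℕ} (v : EuclideanSpace ℝ (Fin d)) : Set (EuclideanSpace ℝ (Fin d)) :=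
  {x | (inner ℝ x v : ℝ) = 0}

noncomputable def secVol (d : ℕ) (v : EuclideanSpace ℝ (Fin d)) : ℝ :=
  hvol d (cube d ∩ perp v)

noncomputable def l1 {d : ℕ} (v : EuclideanSpace ℝ (Fin d)) : ℝ := ∑ i, |v i|

noncomputable def ones (d : ℕ) : EuclideanSpace ℝ (Fin d) := WithLp.toLp 2 (fun _ => 1)

noncomputable def sinc (d : ℕ) : ℝ := (2 / π) * ∫ t in Set.Ioi (0 : ℝ), (Real.sin t / t) ^ d

/-! Appending a zero coordinate to `v` preserves `‖v‖₁` and `‖v‖₂`, and the section of `C^(d+1)`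
by `(v, 0)^⊥` contains, above every height `τ ∈ [-1/2, 1/2]` of the last coordinate, a copy of the
section `C^d ∩ v^⊥`. Slicing an arbitrary cover of the big section at each height and integrating
over `τ` gives `𝓗^(d-1)(C^d ∩ v^⊥) ≤ 𝓗^d(C^(d+1) ∩ (v, 0)^⊥)`, so every value in the supremum
for `d` is dominated by one for `d + 1`. The supremum for `d + 1` is finite because each section is
a bounded subset of a hyperplane, hence isometric to a subset of a fixed ball in `ℝ^d`. -/

open Metric
open scoped ENNReal

section Slicing

variable {X Y : Type*} [EMetricSpace X] [EMetricSpace Y]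

noncomputable def hausdorffApprox (s : ℝ) (r : ℝ≥0∞) (A : Set Y) : ℝ≥0∞ :=
  ⨅ (t : ℕ → Set Y) (_ : A ⊆ ⋃ n, t n) (_ : ∀ n, ediam (t n) ≤ r),
    ∑' n, ⨆ _ : (t n).Nonempty, ediam (t n) ^ s

theorem hausdorffMeasure_eq_iSup_hausdorffApprox [MeasurableSpace Y] [BorelSpace Y]
    (s : ℝ) (A : Set Y) : μH[s] A = ⨆ (r : ℝ≥0∞) (_ : 0 < r), hausdorffApprox s r A :=
  Measure.hausdorffMeasure_apply s A

variable {f : X → Y} {g : X → ℝ} {s : ℝ} {r : ℝ≥0∞} {A : Set Y} {B : Set X} {I : Set ℝ}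

theorem hausdorffApprox_le_of_le_tsum {u : ℕ → Set Y} (hcov : A ⊆ ⋃ n, u n)
    (hdiam : ∀ n, ediam (u n) ≤ r) {c : ℕ → ℝ≥0∞}
    (hc : ∀ n, (⨆ _ : (u n).Nonempty, ediam (u n) ^ s) ≤ c n) :
    hausdorffApprox s r A ≤ ∑' n, c n :=
  iInf₂_le_of_le u hcov <| iInf_le_of_le hdiam <| ENNReal.tsum_le_tsum hc

/-- Slicing a cover of `B` at height `τ` of `g` and pushing it forward by `f` gives a cover of
`A`; only the pieces whose `g`-image reaches `τ` contribute. -/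
theorem hausdorffApprox_le_tsum_indicator (hf : LipschitzWith 1 f) (hs : 0 ≤ s)
    {t : ℕ → Set X} (hcov : B ⊆ ⋃ n, t n) (hdiam : ∀ n, ediam (t n) ≤ r) {τ : ℝ}
    (hslice : A ⊆ f '' (B ∩ g ⁻¹' {τ})) :
    hausdorffApprox s r A ≤
      ∑' n, (closure (g '' t n)).indicator (fun _ => ediam (t n) ^ s) τ := by
  have hdiam_image : ∀ n, ediam (f '' (t n ∩ g ⁻¹' {τ})) ≤ ediam (t n) := fun n =>
    (hf.ediam_image_le _).trans_eq (one_mul _) |>.trans (ediam_mono Set.inter_subset_left)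
  refine hausdorffApprox_le_of_le_tsum (u := fun n => f '' (t n ∩ g ⁻¹' {τ})) ?_
    (fun n => (hdiam_image n).trans (hdiam n)) fun n => iSup_le fun hne => ?_
  · rintro y hy
    obtain ⟨x, ⟨hxB, hxτ⟩, rfl⟩ := hslice hy
    obtain ⟨n, hxn⟩ := Set.mem_iUnion.1 (hcov hxB)
    exact Set.mem_iUnion.2 ⟨n, x, ⟨hxn, hxτ⟩, rfl⟩
  · obtain ⟨_, ⟨x, ⟨hxn, hxτ⟩, rfl⟩⟩ := hne
    have hτ : τ ∈ closure (g '' t n) := subset_closure ⟨x, hxn, hxτ⟩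
    rw [Set.indicator_of_mem hτ]
    exact ENNReal.rpow_le_rpow (hdiam_image n) hs

theorem ediam_rpow_mul_volume_closure_image_le (hg : LipschitzWith 1 g) (hs : 0 ≤ s) (t : Set X) :
    ediam t ^ s * volume (closure (g '' t)) ≤ ⨆ _ : t.Nonempty, ediam t ^ (s + 1) := by
  rcases t.eq_empty_or_nonempty with rfl | ht
  · simp
  have hvol : volume (closure (g '' t)) ≤ ediam t := by
    refine (Real.volume_le_diam _).trans ?_
    rw [ediam_closure]
    simpa using hg.ediam_image_le t
  calc ediam t ^ s * volume (closure (g '' t)) ≤ ediam t ^ s * ediam t ^ (1 : ℝ) := by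
        rw [ENNReal.rpow_one]; gcongr
    _ = ediam t ^ (s + 1) := (ENNReal.rpow_add_of_nonneg _ _ hs zero_le_one).symm
    _ ≤ _ := le_iSup_of_le ht le_rfl

theorem hausdorffApprox_mul_volume_le_tsum (hf : LipschitzWith 1 f) (hg : LipschitzWith 1 g)
    (hs : 0 ≤ s) (hslice : ∀ τ ∈ I, A ⊆ f '' (B ∩ g ⁻¹' {τ}))
    {t : ℕ → Set X} (hcov : B ⊆ ⋃ n, t n) (hdiam : ∀ n, ediam (t n) ≤ r) :
    hausdorffApprox s r A * volume I ≤ ∑' n, ⨆ _ : (t n).Nonempty, ediam (t n) ^ (s + 1) := by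
  set J : ℕ → Set ℝ := fun n => closure (g '' t n)
  have hJ : ∀ n, MeasurableSet (J n) := fun n => isClosed_closure.measurableSet
  calc hausdorffApprox s r A * volume I = ∫⁻ _ in I, hausdorffApprox s r A :=
        (setLIntegral_const I _).symm
    _ ≤ ∫⁻ τ in I, ∑' n, (J n).indicator (fun _ => ediam (t n) ^ s) τ :=
        setLIntegral_mono (Measurable.tsum fun n => measurable_const.indicator (hJ n))
          fun τ hτ => hausdorffApprox_le_tsum_indicator hf hs hcov hdiam (hslice τ hτ)
    _ = ∑' n, ediam (t n) ^ s * volume (J n ∩ I) := by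
        rw [lintegral_tsum fun n => (measurable_const.indicator (hJ n)).aemeasurable]
        refine tsum_congr fun n => ?_
        rw [lintegral_indicator_const (hJ n), Measure.restrict_apply (hJ n)]
    _ ≤ ∑' n, ⨆ _ : (t n).Nonempty, ediam (t n) ^ (s + 1) := ENNReal.tsum_le_tsum fun n =>
        (mul_le_mul_right (measure_mono Set.inter_subset_left) _).trans
          (ediam_rpow_mul_volume_closure_image_le hg hs (t n))

/-- A form of Eilenberg's inequality, with constant `1` for the unnormalized `μH`. -/
theorem hausdorffMeasure_mul_volume_le_of_slices [MeasurableSpace X] [BorelSpace X]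
    [MeasurableSpace Y] [BorelSpace Y] (hf : LipschitzWith 1 f) (hg : LipschitzWith 1 g)
    (hs : 0 ≤ s) (hslice : ∀ τ ∈ I, A ⊆ f '' (B ∩ g ⁻¹' {τ})) :
    μH[s] A * volume I ≤ μH[s + 1] B := by
  simp only [hausdorffMeasure_eq_iSup_hausdorffApprox, ENNReal.iSup_mul]
  exact iSup₂_mono fun r _ => le_iInf₂ fun t hcov => le_iInf fun hdiam =>
    hausdorffApprox_mul_volume_le_tsum hf hg hs hslice hcov hdiam

end Slicing

section Snoc

variable {d : ℕ}

noncomputable def euclideanSnoc (x : EuclideanSpace ℝ (Fin d)) (a : ℝ) :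
    EuclideanSpace ℝ (Fin (d + 1)) :=
  WithLp.toLp 2 (Fin.snoc x.ofLp a)

noncomputable def euclideanInit (y : EuclideanSpace ℝ (Fin (d + 1))) :
    EuclideanSpace ℝ (Fin d) :=
  WithLp.toLp 2 (Fin.init y.ofLp)

@[simp]
theorem euclideanSnoc_castSucc (x : EuclideanSpace ℝ (Fin d)) (a : ℝ) (i : Fin d) :
    euclideanSnoc x a i.castSucc = x i := by
  simp [euclideanSnoc]

@[simp]
theorem euclideanSnoc_last (x : EuclideanSpace ℝ (Fin d)) (a : ℝ) :
    euclideanSnoc x a (Fin.last d) = a := by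
  simp [euclideanSnoc]

@[simp]
theorem euclideanInit_euclideanSnoc (x : EuclideanSpace ℝ (Fin d)) (a : ℝ) :
    euclideanInit (euclideanSnoc x a) = x := by
  ext i; simp [euclideanInit, Fin.init]

theorem euclideanSnoc_ne_zero {x : EuclideanSpace ℝ (Fin d)} (hx : x ≠ 0) (a : ℝ) :
    euclideanSnoc x a ≠ 0 :=
  fun h => hx <| by ext i; simpa using congrArg (· i.castSucc) h

theorem inner_euclideanSnoc (x y : EuclideanSpace ℝ (Fin d)) (a b : ℝ) :
    inner ℝ (euclideanSnoc x a) (euclideanSnoc y b) = inner ℝ x y + a * b := by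
  simp [PiLp.inner_apply, Fin.sum_univ_castSucc, mul_comm]

theorem norm_euclideanSnoc_zero (x : EuclideanSpace ℝ (Fin d)) :
    ‖euclideanSnoc x 0‖ = ‖x‖ := by
  rw [← sq_eq_sq₀ (norm_nonneg _) (norm_nonneg _), ← real_inner_self_eq_norm_sq,
    ← real_inner_self_eq_norm_sq, inner_euclideanSnoc, mul_zero, add_zero]

theorem l1_euclideanSnoc_zero (x : EuclideanSpace ℝ (Fin d)) :
    l1 (euclideanSnoc x 0) = l1 x := by
  simp [l1, Fin.sum_univ_castSucc]

theorem lipschitzWith_euclideanInit : LipschitzWith 1 (euclideanInit (d := d)) :=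
  LipschitzWith.of_dist_le_mul fun x y => by
    rw [NNReal.coe_one, one_mul, EuclideanSpace.dist_eq, EuclideanSpace.dist_eq,
      Fin.sum_univ_castSucc]
    exact Real.sqrt_le_sqrt (le_add_of_nonneg_right (sq_nonneg _))

theorem euclideanSnoc_mem_cube {x : EuclideanSpace ℝ (Fin d)} (hx : x ∈ cube d) {a : ℝ}
    (ha : |a| ≤ 1 / 2) : euclideanSnoc x a ∈ cube (d + 1) :=
  fun i => Fin.lastCases (by simpa using ha) (fun j => by simpa using hx j) i

theorem euclideanSnoc_mem_perp {x v : EuclideanSpace ℝ (Fin d)} (hx : x ∈ perp v) (a : ℝ) :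
    euclideanSnoc x a ∈ perp (euclideanSnoc v 0) := by
  simpa [perp, inner_euclideanSnoc] using hx

end Snoc

theorem lipschitzWith_euclideanSpace_apply {ι : Type*} [Fintype ι] (i : ι) :
    LipschitzWith 1 (fun x : EuclideanSpace ℝ ι => x i) :=
  LipschitzWith.of_dist_le_mul fun x y => by simpa using PiLp.dist_apply_le x y i

theorem cube_inter_perp_subset_image_slice {d : ℕ} (v : EuclideanSpace ℝ (Fin d)) {a : ℝ}
    (ha : a ∈ Set.Icc (-(1 / 2)) (1 / 2)) :
    cube d ∩ perp v ⊆ euclideanInit ''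
      (cube (d + 1) ∩ perp (euclideanSnoc v 0) ∩ (fun y => y (Fin.last d)) ⁻¹' {a}) :=
  fun x ⟨hcube, hperp⟩ => ⟨euclideanSnoc x a,
    ⟨⟨euclideanSnoc_mem_cube hcube (abs_le.2 ha), euclideanSnoc_mem_perp hperp a⟩, by simp⟩,
    by simp⟩

theorem hausdorffMeasure_cube_inter_perp_le {d : ℕ} (hd : 1 ≤ d) (v : EuclideanSpace ℝ (Fin d)) :
    μH[(d : ℝ) - 1] (cube d ∩ perp v) ≤ μH[(d : ℝ)] (cube (d + 1) ∩ perp (euclideanSnoc v 0)) := by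
  have h := hausdorffMeasure_mul_volume_le_of_slices lipschitzWith_euclideanInit
    (lipschitzWith_euclideanSpace_apply (Fin.last d)) (s := (d : ℝ) - 1)
    (by simpa using hd) fun a ha => cube_inter_perp_subset_image_slice v ha
  norm_num at h
  exact h

theorem norm_le_l1 {d : ℕ} (x : EuclideanSpace ℝ (Fin d)) : ‖x‖ ≤ l1 x := by
  calc ‖x‖ = ‖∑ i, x i • EuclideanSpace.basisFun (Fin d) ℝ i‖ := by
        congr 1; simpa using ((EuclideanSpace.basisFun (Fin d) ℝ).toBasis.sum_repr x).symm
    _ ≤ l1 x := (norm_sum_le _ _).trans_eq (by simp [l1, norm_smul])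

theorem l1_le_card_mul_norm {d : ℕ} (x : EuclideanSpace ℝ (Fin d)) : l1 x ≤ d * ‖x‖ := by
  simpa [l1] using Finset.sum_le_card_nsmul Finset.univ (fun i => |x i|) ‖x‖
    fun i _ => by simpa using PiLp.norm_apply_le x i

theorem cube_subset_closedBall (d : ℕ) : cube d ⊆ closedBall 0 (d / 2) := fun x hx => by
  rw [mem_closedBall_zero_iff]
  refine (norm_le_l1 x).trans ?_
  calc l1 x ≤ ∑ _i : Fin d, (1 / 2 : ℝ) := Finset.sum_le_sum fun i _ => hx i
    _ = d / 2 := by simp [div_eq_mul_inv]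

theorem perp_eq_orthogonal {d : ℕ} (v : EuclideanSpace ℝ (Fin d)) :
    perp v = ((ℝ ∙ v)ᗮ : Submodule ℝ (EuclideanSpace ℝ (Fin d))) := by
  ext x
  exact Submodule.mem_orthogonal_singleton_iff_inner_left.symm

theorem hausdorffMeasure_le_closedBall_of_subset_submodule {E : Type*} [NormedAddCommGroup E]
    [InnerProductSpace ℝ E] [MeasurableSpace E] [BorelSpace E] {P : Submodule ℝ E}
    [FiniteDimensional ℝ P] {m : ℕ} (hP : Module.finrank ℝ P = m) {S : Set E} {R : ℝ}
    (hSP : S ⊆ P) (hSR : S ⊆ closedBall 0 R) :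
    μH[m] S ≤ μH[m] (closedBall (0 : EuclideanSpace ℝ (Fin m)) R) := by
  let e : EuclideanSpace ℝ (Fin m) ≃ₗᵢ[ℝ] P :=
    ((stdOrthonormalBasis ℝ P).reindex (finCongr hP)).repr.symm
  let g : EuclideanSpace ℝ (Fin m) →ₗᵢ[ℝ] E := P.subtypeₗᵢ.comp e.toLinearIsometry
  have hS : S ⊆ g '' closedBall 0 R := fun x hx => ⟨e.symm ⟨x, hSP hx⟩, by
    simpa [g] using hSR hx, by simp [g]⟩
  calc μH[m] S ≤ μH[m] (g '' closedBall 0 R) := measure_mono hS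
    _ = μH[m] (closedBall (0 : EuclideanSpace ℝ (Fin m)) R) :=
        g.isometry.hausdorffMeasure_image (Or.inl m.cast_nonneg) _

theorem hausdorffMeasure_cube_inter_perp_le_closedBall {d : ℕ}
    {v : EuclideanSpace ℝ (Fin (d + 1))} (hv : v ≠ 0) :
    μH[(d : ℝ)] (cube (d + 1) ∩ perp v) ≤
      μH[(d : ℝ)] (closedBall (0 : EuclideanSpace ℝ (Fin d)) ((d + 1 : ℕ) / 2)) := by
  have : Fact (Module.finrank ℝ (EuclideanSpace ℝ (Fin (d + 1))) = d + 1) := ⟨by simp⟩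
  refine hausdorffMeasure_le_closedBall_of_subset_submodule
    (Submodule.finrank_orthogonal_span_singleton hv) ?_
    (Set.inter_subset_left.trans (cube_subset_closedBall _))
  rw [← perp_eq_orthogonal]
  exact Set.inter_subset_right

theorem hausdorffMeasure_cube_inter_perp_lt_top {d : ℕ} {v : EuclideanSpace ℝ (Fin (d + 1))}
    (hv : v ≠ 0) : μH[(d : ℝ)] (cube (d + 1) ∩ perp v) < ⊤ :=
  (hausdorffMeasure_cube_inter_perp_le_closedBall hv).trans_lt measure_closedBall_lt_top

theorem l1_nonneg {d : ℕ} (v : EuclideanSpace ℝ (Fin d)) : 0 ≤ l1 v :=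
  Finset.sum_nonneg fun i _ => abs_nonneg (v i)

theorem secVol_nonneg (d : ℕ) (v : EuclideanSpace ℝ (Fin d)) : 0 ≤ secVol d v :=
  ENNReal.toReal_nonneg

theorem secVol_succ (d : ℕ) (v : EuclideanSpace ℝ (Fin (d + 1))) :
    secVol (d + 1) v = (μH[(d : ℝ)] (cube (d + 1) ∩ perp v)).toReal := by
  simp [secVol, hvol]

theorem secVol_succ_le {d : ℕ} {v : EuclideanSpace ℝ (Fin (d + 1))} (hv : v ≠ 0) :
    secVol (d + 1) v ≤
      (μH[(d : ℝ)] (closedBall (0 : EuclideanSpace ℝ (Fin d)) ((d + 1 : ℕ) / 2))).toReal := by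
  rw [secVol_succ]
  exact ENNReal.toReal_mono measure_closedBall_lt_top.ne
    (hausdorffMeasure_cube_inter_perp_le_closedBall hv)

theorem secVol_le_secVol_euclideanSnoc {d : ℕ} {v : EuclideanSpace ℝ (Fin d)} (hv : v ≠ 0) :
    secVol d v ≤ secVol (d + 1) (euclideanSnoc v 0) := by
  have hd : 1 ≤ d := Nat.one_le_iff_ne_zero.2 (by rintro rfl; exact hv (Subsingleton.elim _ _))
  rw [secVol_succ]
  exact ENNReal.toReal_mono
    (hausdorffMeasure_cube_inter_perp_lt_top (euclideanSnoc_ne_zero hv 0)).ne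
    (hausdorffMeasure_cube_inter_perp_le hd v)

theorem bddAbove_l1_div_norm_mul_secVol_succ (d : ℕ) :
    BddAbove {r : ℝ | ∃ v : EuclideanSpace ℝ (Fin (d + 1)), v ≠ 0 ∧
      r = (l1 v / ‖v‖) * secVol (d + 1) v} := by
  refine ⟨(d + 1 : ℕ) * (μH[(d : ℝ)]
    (closedBall (0 : EuclideanSpace ℝ (Fin d)) ((d + 1 : ℕ) / 2))).toReal, ?_⟩
  rintro _ ⟨v, hv, rfl⟩
  have hratio : l1 v / ‖v‖ ≤ (d + 1 : ℕ) :=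
    (div_le_iff₀ (norm_pos_iff.2 hv)).2 (l1_le_card_mul_norm v)
  exact mul_le_mul hratio (secVol_succ_le hv) (secVol_nonneg _ _) (Nat.cast_nonneg _)

theorem Vd_monotone_general (d : ℕ) :
    sSup {r : ℝ | ∃ v : EuclideanSpace ℝ (Fin d), v ≠ 0 ∧
        r = (l1 v / ‖v‖) * secVol d v} ≤
      sSup {r : ℝ | ∃ v : EuclideanSpace ℝ (Fin (d + 1)), v ≠ 0 ∧
        r = (l1 v / ‖v‖) * secVol (d + 1) v} := by
  refine Real.sSup_le ?_ (Real.sSup_nonneg ?_)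
  · rintro _ ⟨v, hv, rfl⟩
    refine le_csSup_of_le (bddAbove_l1_div_norm_mul_secVol_succ d)
      ⟨euclideanSnoc v 0, euclideanSnoc_ne_zero hv 0, rfl⟩ ?_
    rw [l1_euclideanSnoc_zero, norm_euclideanSnoc_zero]
    exact mul_le_mul_of_nonneg_left (secVol_le_secVol_euclideanSnoc hv)
      (div_nonneg (l1_nonneg v) (norm_nonneg v))
  · rintro _ ⟨v, -, rfl⟩
    exact mul_nonneg (div_nonneg (l1_nonneg v) (norm_nonneg v)) (secVol_nonneg _ _)

theorem Vd_monotone (d : ℕ) (hd : 2 ≤ d) :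
    sSup {r : ℝ | ∃ v : EuclideanSpace ℝ (Fin d), v ≠ 0 ∧
        r = (l1 v / ‖v‖) * secVol d v} ≤
      sSup {r : ℝ | ∃ v : EuclideanSpace ℝ (Fin (d + 1)), v ≠ 0 ∧
        r = (l1 v / ‖v‖) * secVol (d + 1) v} :=
  Vd_monotone_general d
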